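/- Let x ∈ 𝔻 have no sign-changing ties among its largest modulus jumps, i.e. for every τ ∈ (0,1] and all s, s' ∈ Ã_τ(x) one has Δx(s) = Δx(s') (equivalently, #𝔹_τ(x) = 0 for all τ ∈ [0,1] in the paper's notation). Then the signed largest-modulus trimmer 𝔗_rim is jointly J1-continuous at x: for every sequence x_n ∈ 𝔻 converging to x in the J1-topology there exist λ_n ∈ Λ such that simultaneously ‖λ_n − I‖ → 0, ‖x_n ∘ λ_n − x‖ → 0 and ‖𝔗_rim(x_n) ∘ λ_n − 𝔗_rim(x)‖ → 0. -/

import Mathlib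

open Filter Topology Set unitInterval

noncomputable section

open scoped Classical

instance : Fact ((0:ℝ) ≤ 1) := ⟨zero_le_one⟩

/-- The space `𝔻` of càdlàg functions on `[0,1]`: right-continuous everywhere with
finite left limits everywhere (conditions at the endpoints hold vacuously). -/
def Cadlag (x : I → ℝ) : Prop :=
  (∀ τ : I, Tendsto x (𝓝[>] τ) (𝓝 (x τ))) ∧ (∀ τ : I, ∃ l : ℝ, Tendsto x (𝓝[<] τ) (𝓝 l))

/-- The sup-norm `‖x‖ = sup_{0 ≤ τ ≤ 1} |x(τ)|`. -/
def dNorm (x : I → ℝ) : ℝ := ⨆ τ : I, |x τ|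

/-- The jump `Δx(τ) = x(τ) - x(τ-)` of `x` at `τ`, with `Δx(0) := 0`. -/
def jump (x : I → ℝ) (τ : I) : ℝ := if τ = 0 then 0 else x τ - Function.leftLim x τ

/-- The running supremum `S(x)(τ) = sup_{0 ≤ s ≤ τ} x(s)`. -/
def runSup (x : I → ℝ) (τ : I) : ℝ := sSup (x '' {s : I | s ≤ τ})

/-- The running absolute supremum `S̃(x)(τ) = sup_{0 ≤ s ≤ τ} |x(s)|`. -/
def runAbsSup (x : I → ℝ) (τ : I) : ℝ := sSup ((fun s => |x s|) '' {s : I | s ≤ τ})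

/-- The largest positive jump `S_{+Δ}(x)(τ) = sup_{0 ≤ s ≤ τ} Δx(s)`. -/
def posJumpSup (x : I → ℝ) (τ : I) : ℝ := sSup (jump x '' {s : I | s ≤ τ})

/-- The largest modulus jump `S̃_Δ(x)(τ) = sup_{0 ≤ s ≤ τ} |Δx(s)|`. -/
def modJumpSup (x : I → ℝ) (τ : I) : ℝ := sSup ((fun s => |jump x s|) '' {s : I | s ≤ τ})

/-- The first extremal positive trimming ("trim as you go") operator
`T^{(1,+)}_{rim}(x) = x - S_{+Δ}(x)`. -/
def trimPos (x : I → ℝ) : I → ℝ := fun τ => x τ - posJumpSup x τ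

/-- `Λ`: continuous strictly increasing bijections of `[0,1]` fixing the endpoints. -/
def IsTimeChange (l : I → I) : Prop := Continuous l ∧ StrictMono l ∧ l 0 = 0 ∧ l 1 = 1

/-- Convergence in the (strong) Skorokhod `J₁`-topology. -/
def J1Tendsto (xn : ℕ → I → ℝ) (x : I → ℝ) : Prop :=
  ∃ l : ℕ → I → I, (∀ n, IsTimeChange (l n)) ∧
    Tendsto (fun n => dNorm (fun τ => (l n τ : ℝ) - (τ : ℝ))) atTop (𝓝 0) ∧
    Tendsto (fun n => dNorm (fun τ => xn n (l n τ) - x τ)) atTop (𝓝 0)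

/-- `Ã_τ(x)`: the times `s ∈ (0,τ]` of the largest modulus jump of `x` on `[0,τ]`
(empty when `S̃_Δ(x)(τ) = 0`). -/
def tildeA (x : I → ℝ) (τ : I) : Set I :=
  {s : I | 0 < s ∧ s ≤ τ ∧ 0 < |jump x s| ∧ |jump x s| = modJumpSup x τ}

/-- `A⁺_τ(x)`: the times `s ∈ (0,τ]` of the largest positive jump of `x` on `[0,τ]`
(empty when `S_{+Δ}(x)(τ) = 0`). -/
def posA (x : I → ℝ) (τ : I) : Set I :=
  {s : I | 0 < s ∧ s ≤ τ ∧ 0 < jump x s ∧ jump x s = posJumpSup x τ}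

/-- The signed largest-modulus ("trim as you go") trimmer `𝔗_rim`:
`𝔗_rim(x)(τ) = x(τ) - Δx(L̃_τ(x))` if `Ã_τ(x) ≠ ∅`, `x(τ)` otherwise, where
`L̃_τ(x) = max Ã_τ(x)`. -/
def sgnModTrim (x : I → ℝ) : I → ℝ := fun τ =>
  if (tildeA x τ).Nonempty then x τ - jump x (sSup (tildeA x τ)) else x τ

/-- The record time ("lookback") trimmer:
`R_trim(x) = x - Δx(R₁(x))·1_{[R₁(x),1]}` if `A⁺₁(x) ≠ ∅`, `x` otherwise, where
`R₁(x) = min A⁺₁(x)`. -/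
def recordTrim (x : I → ℝ) : I → ℝ := fun τ =>
  if (posA x 1).Nonempty ∧ sInf (posA x 1) ≤ τ then x τ - jump x (sInf (posA x 1)) else x τ

/-- The modulus record time trimmer:
`R̃_trim(x) = x - Δx(R̃₁(x))·1_{[R̃₁(x),1]}` if `Ã₁(x) ≠ ∅`, `x` otherwise, where
`R̃₁(x) = min Ã₁(x)`. -/
def modRecordTrim (x : I → ℝ) : I → ℝ := fun τ =>
  if (tildeA x 1).Nonempty ∧ sInf (tildeA x 1) ≤ τ then x τ - jump x (sInf (tildeA x 1)) else x τ

/-!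
`𝔗_rim` commutes with time changes, so joint `J₁`-continuity reduces to continuity at `x` for
uniform convergence. If `‖y - x‖ ≤ δ`, every jump and the running maximal jump modulus move by at
most `2δ`. Where the maximal jump modulus of `x` on `[0, τ]` is small, both trimmers remove small
jumps. Where it is large, the finitely many large jump moduli of `x` are separated by a gap, so for
small `δ` every maximal-modulus time of `y` is one of `x`; as these all carry the same jump of `x`,
the removed jumps differ by at most `2δ`.
-/

lemma Set.Finite.exists_pos_le_sub_of_lt {D : Set ℝ} (hD : D.Finite) :
    ∃ ρ > 0, ∀ a ∈ D, ∀ b ∈ D, a < b → ρ ≤ b - a := by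
  set G := insert 1 (image2 (fun a b => b - a) D D ∩ Ioi 0)
  have hG : G.Finite := ((hD.image2 _ hD).inter_of_left _).insert 1
  have hpos : ∀ g ∈ G, 0 < g := by
    rintro g (rfl | ⟨-, hg⟩)
    exacts [one_pos, hg]
  refine ⟨sInf G, hpos _ ((insert_nonempty _ _).csInf_mem hG), fun a ha b hb hab => ?_⟩
  exact csInf_le hG.bddBelow (mem_insert_of_mem _ ⟨mem_image2_of_mem ha hb, sub_pos.2 hab⟩)

section OrderTopology

variable {α β : Type*} [LinearOrder α] [LinearOrder β] [TopologicalSpace α] [TopologicalSpace β]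
  [OrderTopology α] [OrderTopology β]

lemma OrderIso.map_nhdsLT (e : α ≃o β) (a : α) :
    map e (𝓝[<] a) = 𝓝[<] (e a) := by
  rw [← e.image_Iio]
  exact e.toHomeomorph.isEmbedding.map_nhdsWithin_eq _ _

lemma OrderIso.map_nhdsGT (e : α ≃o β) (a : α) :
    map e (𝓝[>] a) = 𝓝[>] (e a) := by
  rw [← e.image_Ioi]
  exact e.toHomeomorph.isEmbedding.map_nhdsWithin_eq _ _

end OrderTopology

lemma OrderIso.map_zero_unitInterval (e : I ≃o I) : e 0 = 0 :=
  e.map_bot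

variable {x y : I → ℝ}

lemma jump_zero : jump x 0 = 0 := if_pos rfl

lemma jump_of_ne_zero {s : I} (hs : s ≠ 0) : jump x s = x s - Function.leftLim x s := if_neg hs

lemma nhdsLT_neBot_of_ne_zero {s : I} (hs : s ≠ 0) : (𝓝[<] s).NeBot :=
  nhdsLT_neBot_of_exists_lt ⟨0, unitInterval.pos_iff_ne_zero.2 hs⟩

namespace Cadlag

lemma tendsto_leftLim (hx : Cadlag x) {s : I} (hs : s ≠ 0) :
    Tendsto x (𝓝[<] s) (𝓝 (Function.leftLim x s)) := by
  have := nhdsLT_neBot_of_ne_zero hs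
  obtain ⟨l, hl⟩ := hx.2 s
  rwa [leftLim_eq_of_tendsto hl]

lemma sub (hy : Cadlag y) (hx : Cadlag x) : Cadlag (y - x) :=
  ⟨fun τ => (hy.1 τ).sub (hx.1 τ), fun τ => by
    obtain ⟨a, ha⟩ := hy.2 τ
    obtain ⟨b, hb⟩ := hx.2 τ
    exact ⟨a - b, ha.sub hb⟩⟩

lemma jump_sub (hy : Cadlag y) (hx : Cadlag x) (s : I) :
    jump (y - x) s = jump y s - jump x s := by
  rcases eq_or_ne s 0 with rfl | hs
  · simp [jump_zero]
  have := nhdsLT_neBot_of_ne_zero hs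
  have hlim : Function.leftLim (y - x) s = Function.leftLim y s - Function.leftLim x s :=
    leftLim_eq_of_tendsto ((hy.tendsto_leftLim hs).sub (hx.tendsto_leftLim hs))
  rw [jump_of_ne_zero hs, jump_of_ne_zero hs, jump_of_ne_zero hs, hlim, Pi.sub_apply]
  ring

lemma abs_jump_le (hx : Cadlag x) {s : I} {c r : ℝ} (hs : |x s - c| ≤ r)
    (hlt : ∀ᶠ u in 𝓝[<] s, |x u - c| ≤ r) : |jump x s| ≤ 2 * r := by
  rcases eq_or_ne s 0 with rfl | hs0
  · rw [jump_zero, abs_zero]; linarith [abs_nonneg (x 0 - c)]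
  have := nhdsLT_neBot_of_ne_zero hs0
  have hlim : |Function.leftLim x s - c| ≤ r :=
    le_of_tendsto ((hx.tendsto_leftLim hs0).sub_const c).abs hlt
  calc |jump x s| = |(x s - c) - (Function.leftLim x s - c)| := by
        rw [jump_of_ne_zero hs0]; ring_nf
    _ ≤ |x s - c| + |Function.leftLim x s - c| := abs_sub _ _
    _ ≤ 2 * r := by linarith

lemma abs_jump_sub_le (hy : Cadlag y) (hx : Cadlag x) {δ : ℝ} (h : ∀ τ, |y τ - x τ| ≤ δ)
    (s : I) : |jump y s - jump x s| ≤ 2 * δ := by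
  rw [← hy.jump_sub hx]
  exact (hy.sub hx).abs_jump_le (c := 0) (by simpa using h s)
    (Eventually.of_forall fun u => by simpa using h u)

lemma eventually_abs_le (hx : Cadlag x) (t : I) : ∃ C, ∀ᶠ u in 𝓝 t, |x u| ≤ C := by
  obtain ⟨l, hl⟩ := hx.2 t
  refine ⟨|l| + |x t| + 1, ?_⟩
  rw [← nhdsNE_sup_pure, ← nhdsLT_sup_nhdsGT, eventually_sup, eventually_sup, eventually_pure]
  refine ⟨⟨?_, ?_⟩, by linarith [abs_nonneg l]⟩
  · filter_upwards [hl.abs.eventually_lt_const (lt_add_one |l|)] with u hu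
    linarith [abs_nonneg (x t)]
  · filter_upwards [(hx.1 t).abs.eventually_lt_const (lt_add_one |x t|)] with u hu
    linarith [abs_nonneg l]

lemma bddAbove_abs (hx : Cadlag x) : BddAbove (range fun τ => |x τ|) := by
  rw [← image_univ]
  refine isCompact_univ.induction_on (p := fun S => BddAbove ((fun τ => |x τ|) '' S))
    (by simp) (fun _ _ hst h => h.mono (image_mono hst))
    (fun _ _ hs ht => by rw [image_union]; exact hs.union ht) fun t _ => ?_
  obtain ⟨C, hC⟩ := hx.eventually_abs_le t
  exact ⟨_, nhdsWithin_le_nhds hC, ⟨C, by rintro _ ⟨u, hu, rfl⟩; exact hu⟩⟩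

lemma bddAbove_abs_jump (hx : Cadlag x) : BddAbove (range fun s => |jump x s|) := by
  obtain ⟨C, hC⟩ := hx.bddAbove_abs
  refine ⟨2 * C, ?_⟩
  rintro _ ⟨s, rfl⟩
  have hbound : ∀ u, |x u - 0| ≤ C := fun u => by simpa using hC ⟨u, rfl⟩
  exact hx.abs_jump_le (hbound s) (Eventually.of_forall hbound)

/-- Both `x` and its left limits stay close to `c` on `S` near `t`. -/
lemma eventually_abs_jump_lt_of_tendsto (hx : Cadlag x) {S : Set I} (hS : IsOpen S) {t : I}
    {c : ℝ} (h : Tendsto x (𝓝[S] t) (𝓝 c)) {ε : ℝ} (hε : 0 < ε) :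
    ∀ᶠ s in 𝓝[S] t, |jump x s| < ε := by
  have hnear : ∀ᶠ u in 𝓝[S] t, |x u - c| ≤ ε / 4 := by
    filter_upwards [Metric.tendsto_nhds.1 h (ε / 4) (by positivity)] with u hu
    exact (Real.dist_eq _ _ ▸ hu).le
  filter_upwards [eventually_eventually_nhdsWithin.2 hnear, self_mem_nhdsWithin] with s hs hsS
  have hlt : ∀ᶠ u in 𝓝[<] s, |x u - c| ≤ ε / 4 :=
    nhdsWithin_le_of_mem (mem_nhdsWithin_of_mem_nhds (hS.mem_nhds hsS)) hs
  linarith [hx.abs_jump_le (hs.self_of_nhdsWithin hsS) hlt]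

lemma eventually_abs_jump_lt (hx : Cadlag x) {ε : ℝ} (hε : 0 < ε) (t : I) :
    ∀ᶠ s in 𝓝[≠] t, |jump x s| < ε := by
  obtain ⟨l, hl⟩ := hx.2 t
  rw [← nhdsLT_sup_nhdsGT, eventually_sup]
  exact ⟨hx.eventually_abs_jump_lt_of_tendsto isOpen_Iio hl hε,
    hx.eventually_abs_jump_lt_of_tendsto isOpen_Ioi (hx.1 t) hε⟩

lemma finite_setOf_le_abs_jump (hx : Cadlag x) {ε : ℝ} (hε : 0 < ε) :
    {s | ε ≤ |jump x s|}.Finite := by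
  have hcodiscrete : {s | ε ≤ |jump x s|}ᶜ ∈ codiscrete I :=
    mem_codiscrete.2 fun t => disjoint_principal_right.2 <| by
      rw [compl_compl]
      exact (hx.eventually_abs_jump_lt hε t).mono fun s hs => not_le.2 hs
  simpa using mem_cofinite.1 (cofinite_le_codiscrete hcodiscrete)

end Cadlag

lemma modJumpSup_le {τ : I} {a : ℝ} (h : ∀ s ≤ τ, |jump x s| ≤ a) :
    modJumpSup x τ ≤ a :=
  csSup_le ⟨_, 0, nonneg', rfl⟩ (by rintro _ ⟨s, hs, rfl⟩; exact h s hs)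

namespace Cadlag

lemma abs_jump_le_modJumpSup (hx : Cadlag x) {s τ : I} (hsτ : s ≤ τ) :
    |jump x s| ≤ modJumpSup x τ :=
  le_csSup (hx.bddAbove_abs_jump.mono (image_subset_range _ _)) ⟨s, hsτ, rfl⟩

lemma modJumpSup_nonneg (hx : Cadlag x) (τ : I) : 0 ≤ modJumpSup x τ :=
  (abs_nonneg _).trans (hx.abs_jump_le_modJumpSup (nonneg' (t := τ)))

lemma abs_modJumpSup_sub_le (hy : Cadlag y) (hx : Cadlag x) {δ : ℝ}
    (h : ∀ τ, |y τ - x τ| ≤ δ) (τ : I) : |modJumpSup y τ - modJumpSup x τ| ≤ 2 * δ := by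
  have hj := hy.abs_jump_sub_le hx h
  refine abs_sub_le_iff.2 ⟨sub_le_iff_le_add.2 (modJumpSup_le fun s hs => ?_),
    sub_le_iff_le_add.2 (modJumpSup_le fun s hs => ?_)⟩
  · linarith [abs_sub_abs_le_abs_sub (jump y s) (jump x s), hx.abs_jump_le_modJumpSup hs, hj s]
  · linarith [abs_sub_abs_le_abs_sub (jump x s) (jump y s), abs_sub_comm (jump x s) (jump y s),
      hy.abs_jump_le_modJumpSup hs, hj s]

lemma tildeA_nonempty (hx : Cadlag x) {τ : I} (hM : 0 < modJumpSup x τ) :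
    (tildeA x τ).Nonempty := by
  set M := modJumpSup x τ
  obtain ⟨s₁, hs₁τ, hs₁⟩ : ∃ s₁ ≤ τ, M / 2 < |jump x s₁| := by
    obtain ⟨_, ⟨s₁, hs₁τ, rfl⟩, hs₁⟩ := exists_lt_of_lt_csSup
      (s := (fun s => |jump x s|) '' {s | s ≤ τ}) ⟨_, 0, nonneg', rfl⟩ (half_lt_self hM)
    exact ⟨s₁, hs₁τ, hs₁⟩
  set V := {s | s ≤ τ} ∩ {s | M / 2 ≤ |jump x s|}
  obtain ⟨m, ⟨hmτ, -⟩, hmax⟩ := V.exists_max_image (fun s => |jump x s|)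
    ((hx.finite_setOf_le_abs_jump (half_pos hM)).inter_of_right _) ⟨s₁, hs₁τ, hs₁.le⟩
  have hmM : |jump x m| = M := by
    refine le_antisymm (hx.abs_jump_le_modJumpSup hmτ) (modJumpSup_le fun s hs => ?_)
    by_cases hsV : M / 2 ≤ |jump x s|
    · exact hmax s ⟨hs, hsV⟩
    · linarith [hmax s₁ ⟨hs₁τ, hs₁.le⟩]
  have hm0 : m ≠ 0 := by
    rintro rfl
    rw [jump_zero, abs_zero] at hmM
    exact hM.ne hmM
  exact ⟨m, unitInterval.pos_iff_ne_zero.2 hm0, hmτ, hmM ▸ hM, hmM⟩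

lemma finite_tildeA (hx : Cadlag x) (τ : I) : (tildeA x τ).Finite := by
  rcases (tildeA x τ).eq_empty_or_nonempty with h | ⟨s₀, hs₀⟩
  · exact h ▸ finite_empty
  exact (hx.finite_setOf_le_abs_jump (hs₀.2.2.2 ▸ hs₀.2.2.1)).subset fun s hs => hs.2.2.2.ge

lemma sSup_tildeA_mem (hx : Cadlag x) {τ : I} (h : (tildeA x τ).Nonempty) :
    sSup (tildeA x τ) ∈ tildeA x τ :=
  h.csSup_mem (hx.finite_tildeA τ)

end Cadlag

/-- The jump `Δx(L̃_τ(x))` removed by `𝔗_rim` at time `τ` (zero when `Ã_τ(x) = ∅`). -/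
def trimmedJump (x : I → ℝ) (τ : I) : ℝ :=
  if (tildeA x τ).Nonempty then jump x (sSup (tildeA x τ)) else 0

lemma sgnModTrim_eq_sub_trimmedJump (τ : I) :
    sgnModTrim x τ = x τ - trimmedJump x τ := by
  unfold sgnModTrim trimmedJump
  split_ifs <;> simp

namespace Cadlag

lemma abs_trimmedJump_le (hx : Cadlag x) (τ : I) : |trimmedJump x τ| ≤ modJumpSup x τ := by
  unfold trimmedJump
  split_ifs with h
  · exact (hx.sSup_tildeA_mem h).2.2.2.le
  · simpa using hx.modJumpSup_nonneg τ

lemma abs_trimmedJump_sub_le (hy : Cadlag y) (hx : Cadlag x) {δ : ℝ}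
    (h : ∀ τ, |y τ - x τ| ≤ δ) (τ : I) :
    |trimmedJump y τ - trimmedJump x τ| ≤ 2 * modJumpSup x τ + 2 * δ := by
  linarith [abs_sub (trimmedJump y τ) (trimmedJump x τ), hy.abs_trimmedJump_le τ,
    hx.abs_trimmedJump_le τ, (abs_sub_le_iff.1 (hy.abs_modJumpSup_sub_le hx h τ)).1]

lemma abs_trimmedJump_sub_le_of_tildeA_subset (hy : Cadlag y) (hx : Cadlag x) {δ : ℝ}
    (h : ∀ τ, |y τ - x τ| ≤ δ) {τ : I}
    (hties : ∀ s ∈ tildeA x τ, ∀ s' ∈ tildeA x τ, jump x s = jump x s')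
    (hy_ne : (tildeA y τ).Nonempty) (hsub : tildeA y τ ⊆ tildeA x τ) :
    |trimmedJump y τ - trimmedJump x τ| ≤ 2 * δ := by
  have hmy := hy.sSup_tildeA_mem hy_ne
  have hx_ne : (tildeA x τ).Nonempty := hy_ne.mono hsub
  rw [trimmedJump, trimmedJump, if_pos hy_ne, if_pos hx_ne,
    ← hties _ (hsub hmy) _ (hx.sSup_tildeA_mem hx_ne)]
  exact hy.abs_jump_sub_le hx h _

/-- The moduli `≥ η / 2` of jumps of `x` take finitely many values, separated by some `ρ > 0`; so a
jump of `x` whose modulus is within `4δ < ρ` of the maximal one is itself maximal. -/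
lemma exists_tildeA_subset (hx : Cadlag x) {η : ℝ} (hη : 0 < η) :
    ∃ δ > 0, ∀ y, Cadlag y → (∀ τ, |y τ - x τ| ≤ δ) →
      ∀ τ, η < modJumpSup x τ → tildeA y τ ⊆ tildeA x τ := by
  obtain ⟨ρ, hρ, hgap⟩ := ((hx.finite_setOf_le_abs_jump (half_pos hη)).image
    fun s => |jump x s|).exists_pos_le_sub_of_lt
  refine ⟨min (η / 8) (ρ / 8), by positivity, fun y hy h τ hM s hs => ?_⟩
  have hδη := min_le_left (η / 8) (ρ / 8)
  have hδρ := min_le_right (η / 8) (ρ / 8)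
  obtain ⟨-, -, -, hmx⟩ := hx.sSup_tildeA_mem (hx.tildeA_nonempty (hη.trans hM))
  have hlow : modJumpSup x τ - 4 * min (η / 8) (ρ / 8) ≤ |jump x s| := by
    linarith [hs.2.2.2, abs_sub_abs_le_abs_sub (jump y s) (jump x s),
      hy.abs_jump_sub_le hx h s, (abs_sub_le_iff.1 (hy.abs_modJumpSup_sub_le hx h τ)).2]
  have hup := hx.abs_jump_le_modJumpSup hs.2.1
  have hmax : |jump x s| = modJumpSup x τ := by
    refine hup.eq_of_not_lt fun hlt => ?_
    have := hgap _ ⟨s, show η / 2 ≤ |jump x s| by linarith, rfl⟩ _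
      ⟨_, show η / 2 ≤ |jump x _| by linarith, hmx⟩ hlt
    linarith
  exact ⟨hs.1, hs.2.1, by linarith, hmax⟩

lemma exists_abs_sgnModTrim_sub_le (hx : Cadlag x)
    (hties : ∀ τ : I, ∀ s ∈ tildeA x τ, ∀ s' ∈ tildeA x τ, jump x s = jump x s')
    {ε : ℝ} (hε : 0 < ε) :
    ∃ δ > 0, ∀ y, Cadlag y → (∀ τ, |y τ - x τ| ≤ δ) →
      ∀ τ, |sgnModTrim y τ - sgnModTrim x τ| ≤ ε := by
  obtain ⟨δ₀, hδ₀, hsub⟩ := hx.exists_tildeA_subset (η := ε / 4) (by positivity)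
  refine ⟨min δ₀ (ε / 8), by positivity, fun y hy h τ => ?_⟩
  have hδε := min_le_right δ₀ (ε / 8)
  have hjump : |trimmedJump y τ - trimmedJump x τ| ≤ ε / 2 + 2 * min δ₀ (ε / 8) := by
    rcases le_or_gt (modJumpSup x τ) (ε / 4) with hsmall | hlarge
    · linarith [hy.abs_trimmedJump_sub_le hx h τ]
    · have hy_ne : (tildeA y τ).Nonempty := hy.tildeA_nonempty <| by
        linarith [(abs_sub_le_iff.1 (hy.abs_modJumpSup_sub_le hx h τ)).2]
      linarith [hy.abs_trimmedJump_sub_le_of_tildeA_subset hx h (hties τ) hy_ne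
        (hsub y hy (fun τ => (h τ).trans (min_le_left _ _)) τ hlarge)]
  rw [sgnModTrim_eq_sub_trimmedJump, sgnModTrim_eq_sub_trimmedJump]
  calc |y τ - trimmedJump y τ - (x τ - trimmedJump x τ)|
      ≤ |y τ - x τ| + |trimmedJump y τ - trimmedJump x τ| := by
        rw [sub_sub_sub_comm]; exact abs_sub _ _
    _ ≤ ε := by linarith [h τ]

end Cadlag

lemma abs_le_dNorm {f : I → ℝ} (hf : BddAbove (range fun τ => |f τ|)) (τ : I) :
    |f τ| ≤ dNorm f :=
  le_ciSup hf τ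

lemma dNorm_le {f : I → ℝ} {a : ℝ} (ha : 0 ≤ a) (h : ∀ τ, |f τ| ≤ a) : dNorm f ≤ a :=
  Real.iSup_le h ha

lemma Cadlag.tendsto_dNorm_sgnModTrim_sub (hx : Cadlag x)
    (hties : ∀ τ : I, ∀ s ∈ tildeA x τ, ∀ s' ∈ tildeA x τ, jump x s = jump x s')
    {ι : Type*} {L : Filter ι} {y : ι → I → ℝ} (hy : ∀ n, Cadlag (y n))
    (h : Tendsto (fun n => dNorm fun τ => y n τ - x τ) L (𝓝 0)) :
    Tendsto (fun n => dNorm fun τ => sgnModTrim (y n) τ - sgnModTrim x τ) L (𝓝 0) := by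
  refine tendsto_order.2 ⟨fun a ha => Eventually.of_forall fun n =>
    ha.trans_le (Real.iSup_nonneg fun τ => abs_nonneg _), fun ε hε => ?_⟩
  obtain ⟨δ, hδ, hclose⟩ := hx.exists_abs_sgnModTrim_sub_le hties (half_pos hε)
  filter_upwards [(tendsto_order.1 h).2 δ hδ] with n hn
  have hyx (τ : I) : |y n τ - x τ| ≤ δ :=
    (abs_le_dNorm ((hy n).sub hx).bddAbove_abs τ).trans hn.le
  exact (dNorm_le (half_pos hε).le (hclose (y n) (hy n) hyx)).trans_lt (half_lt_self hε)

/-- A time change is onto by the intermediate value theorem, hence an order automorphism. -/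
def IsTimeChange.orderIso {l : I → I} (hl : IsTimeChange l) : I ≃o I :=
  StrictMono.orderIsoOfSurjective l hl.2.1 fun b => by
    have h := intermediate_value_univ 0 1 hl.1
    rw [hl.2.2.1, hl.2.2.2] at h
    exact h ⟨nonneg', le_one'⟩

namespace Cadlag

lemma comp_orderIso (hx : Cadlag x) (e : I ≃o I) : Cadlag (x ∘ e) := by
  refine ⟨fun τ => ?_, fun τ => ?_⟩
  · have := hx.1 (e τ)
    rwa [← e.map_nhdsGT, tendsto_map'_iff] at this
  · obtain ⟨c, hc⟩ := hx.2 (e τ)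
    rw [← e.map_nhdsLT, tendsto_map'_iff] at hc
    exact ⟨c, hc⟩

lemma jump_comp_orderIso (hx : Cadlag x) (e : I ≃o I) (s : I) :
    jump (x ∘ e) s = jump x (e s) := by
  rcases eq_or_ne s 0 with rfl | hs
  · rw [jump_zero, OrderIso.map_zero_unitInterval, jump_zero]
  have hes : e s ≠ 0 := (e.injective.ne_iff' e.map_zero_unitInterval).2 hs
  have := nhdsLT_neBot_of_ne_zero hs
  have hlim := hx.tendsto_leftLim hes
  rw [← e.map_nhdsLT, tendsto_map'_iff] at hlim
  rw [jump_of_ne_zero hs, jump_of_ne_zero hes, leftLim_eq_of_tendsto hlim, Function.comp_apply]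

lemma modJumpSup_comp_orderIso (hx : Cadlag x) (e : I ≃o I) (τ : I) :
    modJumpSup (x ∘ e) τ = modJumpSup x (e τ) := by
  simp only [modJumpSup, hx.jump_comp_orderIso e]
  change sSup ((fun s => |jump x s|) ∘ e '' Iic τ) = sSup ((fun s => |jump x s|) '' Iic (e τ))
  rw [image_comp, e.image_Iic]

lemma tildeA_comp_orderIso (hx : Cadlag x) (e : I ≃o I) (τ : I) :
    tildeA (x ∘ e) τ = e ⁻¹' tildeA x (e τ) := by
  have hpos (s : I) : 0 < e s ↔ 0 < s := by
    simpa only [e.map_zero_unitInterval] using e.lt_iff_lt (x := 0) (y := s)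
  ext s
  simp only [tildeA, mem_preimage, mem_ofPred_eq, hx.jump_comp_orderIso e,
    hx.modJumpSup_comp_orderIso e, e.le_iff_le, hpos]

lemma sgnModTrim_comp_orderIso (hx : Cadlag x) (e : I ≃o I) (τ : I) :
    sgnModTrim (x ∘ e) τ = sgnModTrim x (e τ) := by
  have hpre : e ⁻¹' tildeA x (e τ) = e.symm '' tildeA x (e τ) := (e.image_symm_eq_preimage _).symm
  simp only [sgnModTrim, hx.tildeA_comp_orderIso e, hpre, image_nonempty, Function.comp_apply]
  split_ifs
  · rw [hx.jump_comp_orderIso e, sSup_image, ← e.symm.map_sSup, e.apply_symm_apply]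
  · rfl

end Cadlag

/-- if `x ∈ 𝔻` has no sign-changing ties among its largest modulus
jumps, the signed largest-modulus trimmer `𝔗_rim` is jointly `J₁`-continuous
at `x`. -/
theorem stmt9 (x : I → ℝ) (hx : Cadlag x)
    (hties : ∀ τ : I, ∀ s ∈ tildeA x τ, ∀ s' ∈ tildeA x τ, jump x s = jump x s')
    (xn : ℕ → I → ℝ) (hxn : ∀ n, Cadlag (xn n)) (hJ1 : J1Tendsto xn x) :
    ∃ l : ℕ → I → I, (∀ n, IsTimeChange (l n)) ∧
      Tendsto (fun n => dNorm (fun τ => (l n τ : ℝ) - (τ : ℝ))) atTop (𝓝 0) ∧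
      Tendsto (fun n => dNorm (fun τ => xn n (l n τ) - x τ)) atTop (𝓝 0) ∧
      Tendsto (fun n => dNorm (fun τ => sgnModTrim (xn n) (l n τ) - sgnModTrim x τ))
        atTop (𝓝 0) := by
  obtain ⟨l, hl, hl_id, hl_x⟩ := hJ1
  refine ⟨l, hl, hl_id, hl_x, ?_⟩
  have htrim (n : ℕ) (τ : I) : sgnModTrim (xn n) (l n τ) = sgnModTrim (xn n ∘ l n) τ :=
    ((hxn n).sgnModTrim_comp_orderIso (hl n).orderIso τ).symm
  simp only [htrim]
  exact hx.tendsto_dNorm_sgnModTrim_sub hties (fun n => (hxn n).comp_orderIso (hl n).orderIso) hl_x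

end
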